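/- arXiv:1803.00773 — 2 statements merged into one kernel-verified Lean document; each statement's English description precedes it below -/
import Mathlib

section
/- Let k ≥ 1, n ≥ 2k, Σ_k the set of k-sparse vectors of ℝⁿ, w a weight vector with w_i > 0 and max_i w_i = 1, R = ‖·‖_w, and H₀ a set of k indices carrying k largest weights of w. Then sup_{z ∈ T_R(Σ_k)∖{0}} ‖z_{Tᶜ}‖_Σ²/‖z_T‖₂² = sup{ ‖z_{Tᶜ}‖_Σ²/‖z_T‖₂² : z ∈ ℝⁿ, z ≠ 0, ‖z_{H₀}‖_w ≥ ‖z_{H₀ᶜ}‖_w }. -/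
open scoped BigOperators ENNReal RealInnerProductSpace
open MeasureTheory Metric

noncomputable section

/-- The set of `k`-sparse vectors of `ℝⁿ`. -/
def sparseVecs (n k : ℕ) : Set (EuclideanSpace ℝ (Fin n)) :=
  {x | ∃ s : Finset (Fin n), s.card ≤ k ∧ ∀ i ∉ s, x i = 0}

/-- Descent set (collection of descent vectors) of `R` at `x`. -/
def descentCone {n : ℕ} (R : EuclideanSpace ℝ (Fin n) → ℝ) (x : EuclideanSpace ℝ (Fin n)) :
    Set (EuclideanSpace ℝ (Fin n)) := {z | R (x + z) ≤ R x}

/-- Descent vectors of `R` at the model set `S`. -/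
def descentConeSet {n : ℕ} (R : EuclideanSpace ℝ (Fin n) → ℝ)
    (S : Set (EuclideanSpace ℝ (Fin n))) : Set (EuclideanSpace ℝ (Fin n)) :=
  ⋃ x ∈ S, descentCone R x

/-- Weighted ℓ¹-norm `‖z‖_w = ∑ i, w i * |z i|`. -/
def wNorm {n : ℕ} (w : Fin n → ℝ) (z : EuclideanSpace ℝ (Fin n)) : ℝ := ∑ i, w i * |z i|

/-- Restriction of a vector to a set of coordinates (`z_S`). -/
def coordRestrict {n : ℕ} (z : EuclideanSpace ℝ (Fin n)) (S : Finset (Fin n)) :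
    EuclideanSpace ℝ (Fin n) := WithLp.toLp 2 (fun i => if i ∈ S then z i else 0)

/-- Atomic norm `‖·‖_Σ` generated by the `k`-sparse unit vectors. -/
def atomNormSigma (n k : ℕ) (z : EuclideanSpace ℝ (Fin n)) : ℝ :=
  gauge (convexHull ℝ {u : EuclideanSpace ℝ (Fin n) | u ∈ sparseVecs n k ∧ ‖u‖ = 1}) z

/-!
A vector `z` is a descent direction of `‖·‖_w` at some `k`-sparse point iff, for some `k`-set `S`,
its weighted mass on `S` dominates its mass off `S` (for the converse take the point `-2 z_S`).
The ratio `‖z_{Tᶜ}‖_Σ² / ‖z_T‖₂²` only depends on the absolute values of the coordinates of `z` up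
to permutation: both norms are invariant under signed permutations, and the choice of `T` among
tied coordinates does not matter. Moving `S` onto `H₀` by a permutation that fixes `S ∩ H₀` can
only increase the mass on `H₀` and decrease the mass off `H₀`, so both sets of ratios coincide.
-/
open Finset

section Rearrangement

variable {α : Type*} [DecidableEq α]

theorem Finset.exists_perm_swap_sdiff {A B : Finset α} (h : #A = #B) :
    ∃ σ : Equiv.Perm α, (∀ i, σ i ∈ B ↔ i ∈ A) ∧ (∀ i, σ i ∈ A ↔ i ∈ B) ∧
      ∀ i, (i ∈ A ↔ i ∈ B) → σ i = i := by
  let e := equivOfCardEq (card_sdiff_comm h)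
  let f : α → α := fun i =>
    if hA : i ∈ A \ B then e ⟨i, hA⟩ else if hB : i ∈ B \ A then e.symm ⟨i, hB⟩ else i
  have mem_left : ∀ i (hA : i ∈ A \ B), f i = e ⟨i, hA⟩ := fun i hA => dif_pos hA
  have mem_right : ∀ i (hB : i ∈ B \ A), f i = e.symm ⟨i, hB⟩ := fun i hB => by
    simp only [f, dif_neg (fun hA : i ∈ A \ B => (mem_sdiff.1 hB).2 (mem_sdiff.1 hA).1), dif_pos hB]
  have fixed : ∀ i, (i ∈ A ↔ i ∈ B) → f i = i := fun i hi => by simp [f, hi]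
  have hf : Function.Involutive f := by
    intro i
    by_cases hA : i ∈ A \ B
    · rw [mem_left i hA, mem_right _ (e ⟨i, hA⟩).2]; simp
    by_cases hB : i ∈ B \ A
    · rw [mem_right i hB, mem_left _ (e.symm ⟨i, hB⟩).2]; simp
    have hi : i ∈ A ↔ i ∈ B := by simp only [mem_sdiff] at hA hB; tauto
    rw [fixed i hi, fixed i hi]
  refine ⟨hf.toPerm, fun i => ?_, fun i => ?_, fixed⟩ <;> simp only [Function.Involutive.coe_toPerm]
  all_goals
    by_cases hA : i ∈ A \ B
    · have := (e ⟨i, hA⟩).2; rw [mem_left i hA]; simp only [mem_sdiff] at hA this; tauto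
    by_cases hB : i ∈ B \ A
    · have := (e.symm ⟨i, hB⟩).2; rw [mem_right i hB]; simp only [mem_sdiff] at hB this; tauto
    simp only [mem_sdiff] at hA hB
    rw [fixed i (by tauto)]; tauto

theorem exists_perm_abs_comp_eq_of_largest {x : α → ℝ} {V V' : Finset α}
    (hV : ∀ i ∈ V, ∀ j ∉ V, |x j| ≤ |x i|) (hV' : ∀ i ∈ V', ∀ j ∉ V', |x j| ≤ |x i|)
    (h : #V' = #V) : ∃ ρ : Equiv.Perm α, (∀ i, ρ i ∈ V ↔ i ∈ V') ∧ ∀ i, |x (ρ i)| = |x i| := by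
  obtain ⟨ρ, hρV, hρV', hfix⟩ := exists_perm_swap_sdiff h
  refine ⟨ρ, hρV, fun i => ?_⟩
  by_cases hi : i ∈ V' ↔ i ∈ V
  · rw [hfix i hi]
  by_cases hiV' : i ∈ V'
  · have hiV : i ∉ V := fun h => hi (iff_of_true hiV' h)
    exact le_antisymm (hV' i hiV' _ (mt (hρV' i).1 hiV)) (hV _ ((hρV i).2 hiV') i hiV)
  · have hiV : i ∈ V := by tauto
    exact le_antisymm (hV i hiV _ (mt (hρV i).1 hiV')) (hV' _ ((hρV' i).2 hiV) i hiV')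

variable [Fintype α]

theorem exists_perm_sum_compl_le {w x : α → ℝ} {S H : Finset α}
    (hH : ∀ i ∈ H, ∀ j ∉ H, w j ≤ w i) (hcard : #S = #H)
    (hS : ∑ i ∈ Sᶜ, w i * |x i| ≤ ∑ i ∈ S, w i * |x i|) :
    ∃ σ : Equiv.Perm α, ∑ j ∈ Hᶜ, w j * |x (σ j)| ≤ ∑ j ∈ H, w j * |x (σ j)| := by
  obtain ⟨σ, hσS, hσH, hfix⟩ := exists_perm_swap_sdiff hcard.symm
  have le_on : ∀ j ∈ H, w (σ j) ≤ w j := fun j hj => by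
    by_cases hjS : j ∈ S
    · rw [hfix j (iff_of_true hj hjS)]
    · exact hH j hj (σ j) (mt (hσH j).1 hjS)
  have le_off : ∀ j ∉ H, w j ≤ w (σ j) := fun j hj => by
    by_cases hjS : j ∈ S
    · exact hH (σ j) ((hσH j).2 hjS) j hj
    · rw [hfix j (iff_of_false hj hjS)]
  refine ⟨σ, ?_⟩
  calc ∑ j ∈ Hᶜ, w j * |x (σ j)| ≤ ∑ j ∈ Hᶜ, w (σ j) * |x (σ j)| := by
        gcongr with j hj; exact le_off j (mem_compl.1 hj)
    _ = ∑ i ∈ Sᶜ, w i * |x i| := sum_equiv σ (fun j => by simp [hσS]) fun _ _ => rfl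
    _ ≤ ∑ i ∈ S, w i * |x i| := hS
    _ = ∑ j ∈ H, w (σ j) * |x (σ j)| := (sum_equiv σ (fun j => (hσS j).symm) fun _ _ => rfl).symm
    _ ≤ ∑ j ∈ H, w j * |x (σ j)| := by gcongr with j hj; exact le_on j hj

theorem exists_card_eq_sum_compl_le {w x : α → ℝ} (hw : ∀ i, 0 ≤ w i) {s : Finset α} {m : ℕ}
    (hs : #s ≤ m) (hm : m ≤ Fintype.card α)
    (h : ∑ i ∈ sᶜ, w i * |x i| ≤ ∑ i ∈ s, w i * |x i|) :
    ∃ S : Finset α, #S = m ∧ ∑ i ∈ Sᶜ, w i * |x i| ≤ ∑ i ∈ S, w i * |x i| := by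
  obtain ⟨S, hsS, -, hS⟩ := exists_subsuperset_card_eq (subset_univ s) hs (by simpa using hm)
  have hnonneg : ∀ i, 0 ≤ w i * |x i| := fun i => mul_nonneg (hw i) (abs_nonneg _)
  refine ⟨S, hS, ?_⟩
  calc ∑ i ∈ Sᶜ, w i * |x i| ≤ ∑ i ∈ sᶜ, w i * |x i| :=
        sum_le_sum_of_subset_of_nonneg (compl_subset_compl.2 hsS) fun i _ _ => hnonneg i
    _ ≤ ∑ i ∈ s, w i * |x i| := h
    _ ≤ ∑ i ∈ S, w i * |x i| := sum_le_sum_of_subset_of_nonneg hsS fun i _ _ => hnonneg i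

end Rearrangement

section WeightedNorm

variable {n k : ℕ} {w : Fin n → ℝ}

theorem wNorm_coordRestrict (z : EuclideanSpace ℝ (Fin n)) (S : Finset (Fin n)) :
    wNorm w (coordRestrict z S) = ∑ i ∈ S, w i * |z i| := by
  simp [wNorm, coordRestrict, apply_ite, sum_ite_mem]

theorem wNorm_smul (c : ℝ) (z : EuclideanSpace ℝ (Fin n)) :
    wNorm w (c • z) = |c| * wNorm w z := by
  simp [wNorm, abs_mul, mul_sum, mul_left_comm]

theorem wNorm_eq_sum_add_sum_compl (z : EuclideanSpace ℝ (Fin n)) (S : Finset (Fin n)) :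
    wNorm w z = ∑ i ∈ S, w i * |z i| + ∑ i ∈ Sᶜ, w i * |z i| :=
  (sum_add_sum_compl S _).symm

theorem sum_compl_le_of_mem_descentCone (hw : ∀ i, 0 ≤ w i) {x z : EuclideanSpace ℝ (Fin n)}
    {s : Finset (Fin n)} (hx : ∀ i ∉ s, x i = 0) (hz : z ∈ descentCone (wNorm w) x) :
    ∑ i ∈ sᶜ, w i * |z i| ≤ ∑ i ∈ s, w i * |z i| := by
  have hz : wNorm w (x + z) ≤ wNorm w x := hz
  rw [wNorm_eq_sum_add_sum_compl (x + z) s, wNorm_eq_sum_add_sum_compl x s] at hz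
  have off_add : ∑ i ∈ sᶜ, w i * |(x + z) i| = ∑ i ∈ sᶜ, w i * |z i| :=
    sum_congr rfl fun i hi => by simp [hx i (mem_compl.1 hi)]
  have off_x : ∑ i ∈ sᶜ, w i * |x i| = 0 := sum_eq_zero fun i hi => by simp [hx i (mem_compl.1 hi)]
  have on_s : ∑ i ∈ s, w i * |x i| ≤ ∑ i ∈ s, w i * |(x + z) i| + ∑ i ∈ s, w i * |z i| := by
    rw [← sum_add_distrib]
    gcongr with i
    rw [← mul_add]
    gcongr
    · exact hw i
    · simpa [add_comm] using abs_sub_le (x i) (x i + z i) 0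
  linarith

theorem mem_descentConeSet_of_wNorm_compl_le {H : Finset (Fin n)} (hH : #H ≤ k)
    {z : EuclideanSpace ℝ (Fin n)}
    (h : wNorm w (coordRestrict z Hᶜ) ≤ wNorm w (coordRestrict z H)) :
    z ∈ descentConeSet (wNorm w) (sparseVecs n k) := by
  set x := -(2 : ℝ) • coordRestrict z H
  refine Set.mem_biUnion (x := x) ⟨H, hH, fun i hi => by simp [x, coordRestrict, hi]⟩ ?_
  have hxz : wNorm w (x + z) = wNorm w (coordRestrict z H) + wNorm w (coordRestrict z Hᶜ) := by
    rw [wNorm_coordRestrict, wNorm_coordRestrict, wNorm_eq_sum_add_sum_compl (x + z) H]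
    congr 1 <;> refine sum_congr rfl fun i hi => ?_
    · simp [x, coordRestrict, hi, abs_neg, show -(2 * z i) + z i = -z i by ring]
    · simp [x, coordRestrict, mem_compl.1 hi]
  have hx : wNorm w x = 2 * wNorm w (coordRestrict z H) := by
    rw [wNorm_smul]; norm_num
  show wNorm w (x + z) ≤ wNorm w x
  linarith

end WeightedNorm

theorem gauge_image_linearEquiv {E F : Type*} [AddCommGroup E] [Module ℝ E] [AddCommGroup F]
    [Module ℝ F] (e : E ≃ₗ[ℝ] F) (s : Set E) (x : E) : gauge (e '' s) (e x) = gauge s x := by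
  simp only [gauge_def', ← map_smul, e.image_eq_preimage_symm, Set.mem_preimage,
    LinearEquiv.symm_apply_apply]

section Atoms

variable {n k : ℕ}

def sparseUnitVecs (n k : ℕ) : Set (EuclideanSpace ℝ (Fin n)) :=
  {u | u ∈ sparseVecs n k ∧ ‖u‖ = 1}

theorem atomNormSigma_eq_gauge (z : EuclideanSpace ℝ (Fin n)) :
    atomNormSigma n k z = gauge (convexHull ℝ (sparseUnitVecs n k)) z := rfl

theorem norm_eq_of_abs_eq_comp {x y : EuclideanSpace ℝ (Fin n)} (σ : Equiv.Perm (Fin n))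
    (h : ∀ i, |y i| = |x (σ i)|) : ‖y‖ = ‖x‖ := by
  simp only [EuclideanSpace.norm_eq, Real.norm_eq_abs, h]
  rw [Equiv.sum_comp σ fun i => |x i| ^ 2]

theorem mem_sparseVecs_of_abs_eq_comp {x y : EuclideanSpace ℝ (Fin n)} (σ : Equiv.Perm (Fin n))
    (h : ∀ i, |y i| = |x (σ i)|) (hx : x ∈ sparseVecs n k) : y ∈ sparseVecs n k := by
  obtain ⟨s, hs, hx0⟩ := hx
  refine ⟨s.map σ.symm.toEmbedding, by simpa using hs, fun i hi => abs_eq_zero.1 ?_⟩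
  rw [h, hx0, abs_zero]
  simpa [mem_map_equiv] using hi

theorem mem_sparseUnitVecs_of_abs_eq_comp {x y : EuclideanSpace ℝ (Fin n)}
    (σ : Equiv.Perm (Fin n)) (h : ∀ i, |y i| = |x (σ i)|) (hx : x ∈ sparseUnitVecs n k) :
    y ∈ sparseUnitVecs n k :=
  ⟨mem_sparseVecs_of_abs_eq_comp σ h hx.1, (norm_eq_of_abs_eq_comp σ h).trans hx.2⟩

def signedPerm (σ : Equiv.Perm (Fin n)) (ε : Fin n → ℝ) (hε : ∀ i, |ε i| = 1) :
    EuclideanSpace ℝ (Fin n) ≃ₗ[ℝ] EuclideanSpace ℝ (Fin n) where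
  toFun v := WithLp.toLp 2 fun i => ε i * v (σ i)
  invFun v := WithLp.toLp 2 fun i => ε (σ.symm i) * v (σ.symm i)
  map_add' v v' := by ext; simp [mul_add]
  map_smul' c v := by ext; simp [mul_left_comm]
  left_inv v := by ext; simp [← mul_assoc, ← abs_mul_abs_self (ε _), hε]
  right_inv v := by ext; simp [← mul_assoc, ← abs_mul_abs_self (ε _), hε]

theorem abs_signedPerm_apply (σ : Equiv.Perm (Fin n)) {ε : Fin n → ℝ} (hε : ∀ i, |ε i| = 1)
    (v : EuclideanSpace ℝ (Fin n)) (i : Fin n) : |signedPerm σ ε hε v i| = |v (σ i)| := by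
  simp [signedPerm, abs_mul, hε]

theorem abs_signedPerm_symm_apply (σ : Equiv.Perm (Fin n)) {ε : Fin n → ℝ}
    (hε : ∀ i, |ε i| = 1) (v : EuclideanSpace ℝ (Fin n)) (i : Fin n) :
    |(signedPerm σ ε hε).symm v i| = |v (σ.symm i)| := by
  simp [signedPerm, abs_mul, hε]

theorem image_signedPerm_sparseUnitVecs (σ : Equiv.Perm (Fin n)) {ε : Fin n → ℝ}
    (hε : ∀ i, |ε i| = 1) : signedPerm σ ε hε '' sparseUnitVecs n k = sparseUnitVecs n k := by
  ext v
  rw [LinearEquiv.image_eq_preimage_symm, Set.mem_preimage]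
  refine ⟨mem_sparseUnitVecs_of_abs_eq_comp σ fun i => ?_,
    mem_sparseUnitVecs_of_abs_eq_comp σ.symm (abs_signedPerm_symm_apply σ hε v)⟩
  rw [← abs_signedPerm_apply σ hε, LinearEquiv.apply_symm_apply]

theorem atomNormSigma_eq_of_abs_eq_comp {x y : EuclideanSpace ℝ (Fin n)}
    (σ : Equiv.Perm (Fin n)) (h : ∀ i, |y i| = |x (σ i)|) :
    atomNormSigma n k y = atomNormSigma n k x := by
  -- `y` is the image of `x` under a signed permutation, which preserves the atoms
  let ε : Fin n → ℝ := fun i => if y i = x (σ i) then 1 else -1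
  have hε : ∀ i, |ε i| = 1 := fun i => by by_cases hi : y i = x (σ i) <;> simp [ε, hi]
  have hy : signedPerm σ ε hε x = y := by
    ext i
    by_cases hi : y i = x (σ i)
    · simp [signedPerm, ε, hi]
    · show ε i * x (σ i) = y i
      rw [(abs_eq_abs.1 (h i)).resolve_left hi]
      simp [ε, hi]
  rw [← hy, atomNormSigma_eq_gauge, atomNormSigma_eq_gauge,
    ← gauge_image_linearEquiv (signedPerm σ ε hε) _ x, ← LinearEquiv.coe_coe,
    LinearMap.image_convexHull, LinearEquiv.coe_coe, image_signedPerm_sparseUnitVecs]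

end Atoms

section Ratio

variable {n k : ℕ}

theorem abs_coordRestrict_eq_comp {x y : EuclideanSpace ℝ (Fin n)} {V W : Finset (Fin n)}
    (σ : Equiv.Perm (Fin n)) (h : ∀ i, |y i| = |x (σ i)|) (hWV : ∀ i, σ i ∈ V ↔ i ∈ W)
    (i : Fin n) : |coordRestrict y W i| = |coordRestrict x V (σ i)| := by
  simp only [coordRestrict, hWV]
  split_ifs <;> simp [h]

theorem ratio_eq_of_abs_eq_comp (T : EuclideanSpace ℝ (Fin n) → Finset (Fin n))
    (hT : ∀ z, #(T z) = k ∧ ∀ i ∈ T z, ∀ j ∉ T z, |z j| ≤ |z i|)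
    {x y : EuclideanSpace ℝ (Fin n)} (σ : Equiv.Perm (Fin n)) (h : ∀ i, |y i| = |x (σ i)|) :
    atomNormSigma n k (coordRestrict y (T y)ᶜ) ^ 2 / ‖coordRestrict y (T y)‖ ^ 2 =
      atomNormSigma n k (coordRestrict x (T x)ᶜ) ^ 2 / ‖coordRestrict x (T x)‖ ^ 2 := by
  -- `σ` carries `T y` to a set of `k` largest coordinates of `x`, which may differ from `T x`
  -- only among coordinates of equal absolute value
  obtain ⟨hTy, hTy_top⟩ := hT y
  obtain ⟨hTx, hTx_top⟩ := hT x
  set V := (T y).map σ.toEmbedding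
  have hV : ∀ i, σ i ∈ V ↔ i ∈ T y := fun i => by simp [V]
  have hV_top : ∀ i ∈ V, ∀ j ∉ V, |x j| ≤ |x i| := fun i hi j hj => by
    rw [← σ.apply_symm_apply i, hV] at hi
    rw [← σ.apply_symm_apply j, hV] at hj
    simpa [h] using hTy_top _ hi _ hj
  obtain ⟨ρ, hρ, hρ_abs⟩ := exists_perm_abs_comp_eq_of_largest hTx_top hV_top (by simp [V, hTy, hTx])
  have hτ : ∀ i, (σ.trans ρ) i ∈ T x ↔ i ∈ T y := fun i => (hρ (σ i)).trans (hV i)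
  have hτ_abs : ∀ i, |y i| = |x ((σ.trans ρ) i)| := fun i => by simp [hρ_abs, h]
  rw [atomNormSigma_eq_of_abs_eq_comp _ (abs_coordRestrict_eq_comp (V := (T x)ᶜ) _ hτ_abs
      fun i => by rw [mem_compl, mem_compl, hτ]),
    norm_eq_of_abs_eq_comp _ (abs_coordRestrict_eq_comp _ hτ_abs hτ)]

end Ratio

theorem Dsigma_eq_sup_over_H0_general
    (n k : ℕ)
    (w : Fin n → ℝ) (hpos : ∀ i, 0 < w i)
    (T : EuclideanSpace ℝ (Fin n) → Finset (Fin n))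
    (hT : ∀ z, (T z).card = k ∧ ∀ i ∈ T z, ∀ j ∉ T z, |z j| ≤ |z i|)
    (H₀ : Finset (Fin n)) (hH₀card : H₀.card = k)
    (hH₀ : ∀ i ∈ H₀, ∀ j ∉ H₀, w j ≤ w i) :
    sSup {r : ℝ | ∃ z ∈ descentConeSet (wNorm w) (sparseVecs n k) \ {0},
        r = (atomNormSigma n k (coordRestrict z (T z)ᶜ)) ^ 2 / ‖coordRestrict z (T z)‖ ^ 2}
      = sSup {r : ℝ | ∃ z : EuclideanSpace ℝ (Fin n), z ≠ 0 ∧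
          wNorm w (coordRestrict z H₀ᶜ) ≤ wNorm w (coordRestrict z H₀) ∧
          r = (atomNormSigma n k (coordRestrict z (T z)ᶜ)) ^ 2 / ‖coordRestrict z (T z)‖ ^ 2} := by
  have hw : ∀ i, 0 ≤ w i := fun i => (hpos i).le
  congr 1
  ext r
  constructor
  · rintro ⟨z, ⟨hz, hz0⟩, rfl⟩
    obtain ⟨x, ⟨s, hs, hx⟩, hzx⟩ := Set.mem_iUnion₂.1 hz
    obtain ⟨S, hS, hSz⟩ := exists_card_eq_sum_compl_le hw (hs.trans hH₀card.ge)
      (by simpa using card_le_univ H₀) (sum_compl_le_of_mem_descentCone hw hx hzx)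
    obtain ⟨σ, hσ⟩ := exists_perm_sum_compl_le hH₀ hS hSz
    set z' : EuclideanSpace ℝ (Fin n) := WithLp.toLp 2 fun i => z (σ i)
    have hz' : ∀ i, |z' i| = |z (σ i)| := fun i => rfl
    refine ⟨z', ?_, ?_, (ratio_eq_of_abs_eq_comp T hT σ hz').symm⟩
    · rwa [← norm_ne_zero_iff, norm_eq_of_abs_eq_comp σ hz', norm_ne_zero_iff]
    · simpa only [wNorm_coordRestrict] using hσ
  · rintro ⟨z, hz0, hz, rfl⟩
    exact ⟨z, ⟨mem_descentConeSet_of_wNorm_compl_le hH₀card.le hz, hz0⟩, rfl⟩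

/-- Lemma 9 of the paper, the supremum defining `D_Σ(R)` for a weighted ℓ¹-norm
can be taken over vectors whose weighted mass on `H₀` dominates the mass outside.  `T` picks,
for each `z`, `k` indices carrying the `k` largest absolute values of coordinates of `z`. -/
theorem Dsigma_eq_sup_over_H0
    (n k : ℕ) (hk : 1 ≤ k) (hn : 2 * k ≤ n)
    (w : Fin n → ℝ) (hpos : ∀ i, 0 < w i) (hle : ∀ i, w i ≤ 1) (hmax : ∃ i, w i = 1)
    (T : EuclideanSpace ℝ (Fin n) → Finset (Fin n))
    (hT : ∀ z, (T z).card = k ∧ ∀ i ∈ T z, ∀ j ∉ T z, |z j| ≤ |z i|)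
    (H₀ : Finset (Fin n)) (hH₀card : H₀.card = k)
    (hH₀ : ∀ i ∈ H₀, ∀ j ∉ H₀, w j ≤ w i) :
    sSup {r : ℝ | ∃ z ∈ descentConeSet (wNorm w) (sparseVecs n k) \ {0},
        r = (atomNormSigma n k (coordRestrict z (T z)ᶜ)) ^ 2 / ‖coordRestrict z (T z)‖ ^ 2}
      = sSup {r : ℝ | ∃ z : EuclideanSpace ℝ (Fin n), z ≠ 0 ∧
          wNorm w (coordRestrict z H₀ᶜ) ≤ wNorm w (coordRestrict z H₀) ∧
          r = (atomNormSigma n k (coordRestrict z (T z)ᶜ)) ^ 2 / ‖coordRestrict z (T z)‖ ^ 2} :=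
  Dsigma_eq_sup_over_H0_general n k w hpos T hT H₀ hH₀card hH₀

end
end

section
/- Let 1 ≤ k ≤ n, let H ⊆ {1,…,n} with |H| ≤ k, let x ∈ ℝⁿ be supported in H, and let z ∈ ℝⁿ. Then ‖z_{Hᶜ}‖_Σ² + ‖x + z_H‖₂² ≤ ‖x + z‖_Σ². -/
/-!
Put `v = x + z`; since `x` is supported in `H`, `x + z_H = v_H` and `z_{Hᶜ} = v_{Hᶜ}`.
The set `{w | ‖w_{Hᶜ}‖_Σ² + ‖w_H‖₂² ≤ 1}` is convex, both terms being squares of nonnegative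
convex functions. It contains every atom `u`: `u_{Hᶜ}` is again sparse, so
`‖u_{Hᶜ}‖_Σ ≤ ‖u_{Hᶜ}‖₂`, and `‖u_{Hᶜ}‖₂² + ‖u_H‖₂² = ‖u‖₂² = 1`. Hence it contains the unit ball
of `‖·‖_Σ`, and homogeneity gives `‖v_{Hᶜ}‖_Σ² + ‖v_H‖₂² ≤ ‖v‖_Σ²`.
-/

open scoped BigOperators ENNReal RealInnerProductSpace
open MeasureTheory Metric

noncomputable section

section Gauge

variable {E F : Type*} [NormedAddCommGroup E] [NormedSpace ℝ E]
  [NormedAddCommGroup F] [NormedSpace ℝ F]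

theorem convexOn_gauge {s : Set E} (hs : Convex ℝ s) (habs : Absorbent ℝ s) :
    ConvexOn ℝ Set.univ (gauge s) :=
  ⟨convex_univ, fun x _ y _ a b ha hb _ => by
    simpa only [gauge_smul_of_nonneg ha, gauge_smul_of_nonneg hb, smul_eq_mul] using
      gauge_add_le hs habs (a • x) (b • y)⟩

theorem le_gauge_of_forall_mem_le_one {s : Set E} (habs : Absorbent ℝ s) {N : E → ℝ}
    (hN : ∀ (r : ℝ) (x : E), 0 < r → N (r • x) = r * N x) (hs : ∀ y ∈ s, N y ≤ 1)
    (x : E) :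
    N x ≤ gauge s x := by
  refine le_of_forall_gt fun r hr => ?_
  obtain ⟨b, hb, hbr, y, hy, rfl⟩ := exists_lt_of_gauge_lt habs hr
  calc N (b • y) = b * N y := hN b y hb
    _ ≤ b := mul_le_of_le_one_right hb.le (hs y hy)
    _ < r := hbr

theorem gauge_comp_sq_add_norm_comp_sq_le {A : Set E} (habs : Absorbent ℝ (convexHull ℝ A))
    (P : E →ₗ[ℝ] E) (Q : E →ₗ[ℝ] F)
    (hA : ∀ a ∈ A, gauge (convexHull ℝ A) (P a) ^ 2 + ‖Q a‖ ^ 2 ≤ 1) (x : E) :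
    gauge (convexHull ℝ A) (P x) ^ 2 + ‖Q x‖ ^ 2 ≤ gauge (convexHull ℝ A) x ^ 2 := by
  set C := convexHull ℝ A
  have hP : ConvexOn ℝ Set.univ (gauge C ∘ P) :=
    (convexOn_gauge (convex_convexHull ℝ A) habs).comp_linearMap P
  have hQ : ConvexOn ℝ Set.univ (norm ∘ Q) := (convexOn_norm convex_univ).comp_linearMap Q
  have hconv : Convex ℝ {y | gauge C (P y) ^ 2 + ‖Q y‖ ^ 2 ≤ 1} := by
    simpa only [Set.mem_univ, true_and, Pi.add_apply, Pi.pow_apply, Function.comp_apply] using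
      ((hP.pow (fun y _ => gauge_nonneg _) 2).add
        (hQ.pow (fun y _ => norm_nonneg _) 2)).convex_le 1
  have hC : ∀ y ∈ C, gauge C (P y) ^ 2 + ‖Q y‖ ^ 2 ≤ 1 := fun y hy => convexHull_min hA hconv hy
  have hN : ∀ (r : ℝ) (y : E), 0 < r → √(gauge C (P (r • y)) ^ 2 + ‖Q (r • y)‖ ^ 2)
      = r * √(gauge C (P y) ^ 2 + ‖Q y‖ ^ 2) := fun r y hr => by
    rw [map_smul, map_smul, gauge_smul_of_nonneg hr.le, norm_smul, Real.norm_of_nonneg hr.le,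
      smul_eq_mul, mul_pow, mul_pow, ← mul_add, Real.sqrt_mul (sq_nonneg r),
      Real.sqrt_sq hr.le]
  have hle := le_gauge_of_forall_mem_le_one habs hN
    (fun y hy => Real.sqrt_le_one.mpr (hC y hy)) x
  exact (Real.sqrt_le_iff.mp hle).2

end Gauge

section CoordRestrict

variable {n k : ℕ}

def coordRestrictₗ (S : Finset (Fin n)) :
    EuclideanSpace ℝ (Fin n) →ₗ[ℝ] EuclideanSpace ℝ (Fin n) where
  toFun z := coordRestrict z S
  map_add' v w := by
    ext i
    simp only [coordRestrict, PiLp.toLp_apply, PiLp.add_apply]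
    split_ifs <;> simp
  map_smul' c v := by
    ext i
    simp only [coordRestrict, PiLp.toLp_apply, PiLp.smul_apply]
    split_ifs <;> simp

@[simp]
theorem coordRestrictₗ_apply (S : Finset (Fin n)) (z : EuclideanSpace ℝ (Fin n)) :
    coordRestrictₗ S z = coordRestrict z S :=
  rfl

theorem coordRestrict_add (v w : EuclideanSpace ℝ (Fin n)) (S : Finset (Fin n)) :
    coordRestrict (v + w) S = coordRestrict v S + coordRestrict w S :=
  map_add (coordRestrictₗ S) v w

theorem coordRestrict_eq_self {x : EuclideanSpace ℝ (Fin n)} {S : Finset (Fin n)}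
    (hx : ∀ i ∉ S, x i = 0) : coordRestrict x S = x := by
  ext i
  by_cases hi : i ∈ S <;> simp [coordRestrict, hi, hx]

theorem coordRestrict_compl_eq_zero {x : EuclideanSpace ℝ (Fin n)} {S : Finset (Fin n)}
    (hx : ∀ i ∉ S, x i = 0) : coordRestrict x Sᶜ = 0 := by
  ext i
  by_cases hi : i ∈ S <;> simp [coordRestrict, hi, hx]

theorem norm_coordRestrict_sq_add_norm_coordRestrict_compl_sq (v : EuclideanSpace ℝ (Fin n))
    (S : Finset (Fin n)) : ‖coordRestrict v S‖ ^ 2 + ‖coordRestrict v Sᶜ‖ ^ 2 = ‖v‖ ^ 2 := by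
  simp only [EuclideanSpace.norm_sq_eq, ← Finset.sum_add_distrib]
  refine Finset.sum_congr rfl fun i _ => ?_
  by_cases hi : i ∈ S <;> simp [coordRestrict, hi]

theorem coordRestrict_mem_sparseVecs {v : EuclideanSpace ℝ (Fin n)} (hv : v ∈ sparseVecs n k)
    (S : Finset (Fin n)) : coordRestrict v S ∈ sparseVecs n k := by
  obtain ⟨s, hs, hv⟩ := hv
  exact ⟨s, hs, fun i hi => by simp [coordRestrict, hv i hi]⟩

end CoordRestrict

section SparseAtoms

variable {n k : ℕ}

def sparseAtoms (n k : ℕ) : Set (EuclideanSpace ℝ (Fin n)) :=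
  {u | u ∈ sparseVecs n k ∧ ‖u‖ = 1}

theorem gauge_le_norm_of_mem_sparseVecs {v : EuclideanSpace ℝ (Fin n)}
    (hv : v ∈ sparseVecs n k) :
    gauge (convexHull ℝ (sparseAtoms n k)) v ≤ ‖v‖ := by
  rcases eq_or_ne v 0 with rfl | hv0
  · simp
  refine gauge_le_of_mem (norm_nonneg v) ⟨‖v‖⁻¹ • v, subset_convexHull ℝ _ ⟨?_, ?_⟩, ?_⟩
  · obtain ⟨s, hs, hv⟩ := hv
    exact ⟨s, hs, fun i hi => by simp [hv i hi]⟩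
  · rw [norm_smul, norm_inv, norm_norm, inv_mul_cancel₀ (norm_ne_zero_iff.mpr hv0)]
  · exact smul_inv_smul₀ (norm_ne_zero_iff.mpr hv0) v

theorem single_mem_convexHull_sparseAtoms (hk : 1 ≤ k) (i : Fin n) {c : ℝ} (hc : |c| ≤ 1) :
    EuclideanSpace.single i c ∈ convexHull ℝ (sparseAtoms n k) := by
  have hatom : ∀ c : ℝ, |c| = 1 → EuclideanSpace.single i c ∈ sparseAtoms n k := fun c hc =>
    ⟨⟨{i}, by simpa using hk, fun j hj => by simp_all⟩, by simpa⟩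
  refine segment_subset_convexHull (hatom 1 (by simp)) (hatom (-1) (by simp))
    ⟨(1 + c) / 2, (1 - c) / 2, by linarith [neg_abs_le c], by linarith [le_abs_self c],
      by ring, ?_⟩
  ext j
  by_cases hj : j = i <;> simp [hj]
  ring

theorem ball_subset_convexHull_sparseAtoms (hk : 1 ≤ k) (hn : 0 < n) :
    ball 0 (n : ℝ)⁻¹ ⊆ convexHull ℝ (sparseAtoms n k) := by
  intro w hw
  have hsum : ∑ i, (n : ℝ)⁻¹ • EuclideanSpace.single i (n * w i) = w := by
    ext j
    simp only [WithLp.ofLp_sum, WithLp.ofLp_smul, PiLp.ofLp_single, Finset.sum_apply,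
      Pi.smul_apply, Pi.single_apply, smul_eq_mul, mul_ite, mul_zero, Finset.sum_ite_eq,
      Finset.mem_univ, ↓reduceIte]
    field_simp
  rw [← hsum]
  refine (convex_convexHull ℝ _).sum_mem (fun _ _ => by positivity) (by simp [hn.ne'])
    fun i _ => single_mem_convexHull_sparseAtoms hk i ?_
  apply le_of_lt
  calc |n * w i| = n * ‖w i‖ := by rw [abs_mul, Nat.abs_cast, Real.norm_eq_abs]
    _ ≤ n * ‖w‖ := by gcongr; exact PiLp.norm_apply_le w i
    _ < n * (n : ℝ)⁻¹ := by gcongr; exact mem_ball_zero_iff.mp hw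
    _ = 1 := mul_inv_cancel₀ (by positivity)

theorem absorbent_convexHull_sparseAtoms (hk : 1 ≤ k) (hn : 0 < n) :
    Absorbent ℝ (convexHull ℝ (sparseAtoms n k)) :=
  absorbent_nhds_zero <| Filter.mem_of_superset (ball_mem_nhds 0 (by positivity))
    (ball_subset_convexHull_sparseAtoms hk hn)

theorem atomNormSigma_compl_sq_add_norm_sq_le (hk : 1 ≤ k) (hn : 0 < n) (S : Finset (Fin n))
    (v : EuclideanSpace ℝ (Fin n)) :
    atomNormSigma n k (coordRestrict v Sᶜ) ^ 2 + ‖coordRestrict v S‖ ^ 2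
      ≤ atomNormSigma n k v ^ 2 := by
  refine gauge_comp_sq_add_norm_comp_sq_le (absorbent_convexHull_sparseAtoms hk hn)
    (coordRestrictₗ Sᶜ) (coordRestrictₗ S) (fun a ⟨ha, ha1⟩ => ?_) v
  calc gauge (convexHull ℝ (sparseAtoms n k)) (coordRestrict a Sᶜ) ^ 2 + ‖coordRestrict a S‖ ^ 2
      ≤ ‖coordRestrict a Sᶜ‖ ^ 2 + ‖coordRestrict a S‖ ^ 2 := by
        gcongr
        exacts [gauge_nonneg _,
          gauge_le_norm_of_mem_sparseVecs (coordRestrict_mem_sparseVecs ha Sᶜ)]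
    _ = 1 := by
      rw [add_comm, norm_coordRestrict_sq_add_norm_coordRestrict_compl_sq, ha1, one_pow]

end SparseAtoms

theorem atomNorm_split_inequality_general
    (n k : ℕ) (hk : 1 ≤ k) (hkn : k ≤ n)
    (H : Finset (Fin n))
    (x z : EuclideanSpace ℝ (Fin n)) (hx : ∀ i ∉ H, x i = 0) :
    (atomNormSigma n k (coordRestrict z Hᶜ)) ^ 2 + ‖x + coordRestrict z H‖ ^ 2
      ≤ (atomNormSigma n k (x + z)) ^ 2 := by
  have hH : coordRestrict (x + z) H = x + coordRestrict z H := by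
    rw [coordRestrict_add, coordRestrict_eq_self hx]
  have hHc : coordRestrict (x + z) Hᶜ = coordRestrict z Hᶜ := by
    rw [coordRestrict_add, coordRestrict_compl_eq_zero hx, zero_add]
  simpa only [hH, hHc] using
    atomNormSigma_compl_sq_add_norm_sq_le hk (by omega) H (x + z)

/-- key inequality from the proof of Proposition 1 of the paper:
`‖z_{Hᶜ}‖_Σ² + ‖x + z_H‖₂² ≤ ‖x + z‖_Σ²` for `x` supported in `H`, `|H| ≤ k`. -/
theorem atomNorm_split_inequality
    (n k : ℕ) (hk : 1 ≤ k) (hkn : k ≤ n)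
    (H : Finset (Fin n)) (hH : H.card ≤ k)
    (x z : EuclideanSpace ℝ (Fin n)) (hx : ∀ i ∉ H, x i = 0) :
    (atomNormSigma n k (coordRestrict z Hᶜ)) ^ 2 + ‖x + coordRestrict z H‖ ^ 2
      ≤ (atomNormSigma n k (x + z)) ^ 2 :=
  atomNorm_split_inequality_general n k hk hkn H x z hx

end
end
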